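/- arXiv:2507.03356 — 4 statements merged into one kernel-verified Lean document; each statement's English description precedes it below -/
import Mathlib

section
/- Let A_l ∈ ℂ^{n×n} (1 ≤ l ≤ N) be complex matrices and B_l, C_l ∈ ℝ^{n×n} (1 ≤ l ≤ N) be matrices with nonnegative entries such that |[A_l]_{ij}| ≤ √([B_l]_{ij} · [C_l]_{ij}) for all i, j, l. Let A = A₁A₂⋯A_N, B = B₁B₂⋯B_N, C = C₁C₂⋯C_N. Then: (i) |[A]_{ij}| ≤ √([B]_{ij} · [C]_{ij}) for all i, j; (ii) ρ(A) ≤ √(ρ(B) ρ(C)), where ρ denotes the spectral radius. Moreover, if max(ρ(B), ρ(C)) < 1, then I_n − A, I_n − B and I_n − C are invertible and ‖(I_n − A)^{-1}‖_∞ ≤ √( ‖(I_n − B)^{-1}‖_∞ · ‖(I_n − C)^{-1}‖_∞ ) and ‖(I_n − A)^{-1}‖₁ ≤ √( ‖(I_n − B)^{-1}‖₁ · ‖(I_n − C)^{-1}‖₁ ). -/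
/-!
Cauchy–Schwarz, `∑ √(bₖ cₖ) ≤ √(∑ bₖ · ∑ cₖ)`, makes the entrywise domination `|a| ≤ √(b c)`
by nonnegative `b, c` stable under sums, hence under matrix products, powers and convergent
series. For powers it gives `‖A^k‖ ≤ √(‖B^k‖ ‖C^k‖)` in the `ℓ∞` operator norm, and Gelfand's
formula turns this into `ρ(A) ≤ √(ρ(B) ρ(C))`. If `ρ(B), ρ(C) < 1`, the Neumann series of `B` and
`C` converge, so that of `A` converges by domination; then `(I - M)⁻¹ = ∑ Mᵏ` for all three,
and the inverses inherit the domination, which bounds their row sums (and, through transposes,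
their column sums).
-/

open Matrix
open scoped ENNReal

noncomputable section

/-- Spectral radius of a complex square matrix. -/
noncomputable def specRad {n : ℕ} (M : Matrix (Fin n) (Fin n) ℂ) : ℝ≥0∞ :=
  spectralRadius ℂ M

/-- Maximum row-sum norm `‖M‖_∞` of a square matrix. -/
noncomputable def rowNorm {n : ℕ} {α : Type*} [SeminormedAddGroup α]
    (M : Matrix (Fin n) (Fin n) α) : ℝ :=
  ⨆ i, ∑ j, ‖M i j‖

/-- Maximum column-sum norm `‖M‖₁` of a square matrix. -/
noncomputable def colNorm {n : ℕ} {α : Type*} [SeminormedAddGroup α]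
    (M : Matrix (Fin n) (Fin n) α) : ℝ :=
  ⨆ j, ∑ i, ‖M i j‖

open Filter
open scoped NNReal

namespace Real

theorem sum_sqrt_mul_le_sqrt_mul_sum {ι : Type*} (s : Finset ι) {b c : ι → ℝ}
    (hb : ∀ i, 0 ≤ b i) (hc : ∀ i, 0 ≤ c i) :
    ∑ i ∈ s, √(b i * c i) ≤ √((∑ i ∈ s, b i) * ∑ i ∈ s, c i) := by
  simp_rw [sqrt_mul (hb _), sqrt_mul (Finset.sum_nonneg fun i _ => hb i)]
  exact sum_sqrt_mul_sqrt_le s hb hc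

theorem sqrt_mul_le_add {b c : ℝ} (hb : 0 ≤ b) (hc : 0 ≤ c) : √(b * c) ≤ b + c :=
  sqrt_le_iff.2 ⟨by positivity, by nlinarith⟩

variable {ι : Type*} {b c : ι → ℝ}

theorem summable_sqrt_mul (hb : ∀ i, 0 ≤ b i) (hc : ∀ i, 0 ≤ c i) (hbs : Summable b)
    (hcs : Summable c) : Summable fun i => √(b i * c i) :=
  (hbs.add hcs).of_nonneg_of_le (fun _ => sqrt_nonneg _) fun i => sqrt_mul_le_add (hb i) (hc i)

theorem tsum_sqrt_mul_le_sqrt_mul_tsum (hb : ∀ i, 0 ≤ b i) (hc : ∀ i, 0 ≤ c i)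
    (hbs : Summable b) (hcs : Summable c) :
    ∑' i, √(b i * c i) ≤ √((∑' i, b i) * ∑' i, c i) :=
  (summable_sqrt_mul hb hc hbs hcs).tsum_le_of_sum_le fun s =>
    (sum_sqrt_mul_le_sqrt_mul_sum s hb hc).trans <| sqrt_le_sqrt <|
      mul_le_mul (hbs.sum_le_tsum s fun i _ => hb i) (hcs.sum_le_tsum s fun i _ => hc i)
        (Finset.sum_nonneg fun i _ => hc i) (tsum_nonneg hb)

end Real

section SqrtMulBound

variable {ι E : Type*} [SeminormedAddCommGroup E] {a : ι → E} {b c : ι → ℝ}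

theorem sum_norm_le_sqrt_mul_sum (s : Finset ι) (hb : ∀ i, 0 ≤ b i) (hc : ∀ i, 0 ≤ c i)
    (h : ∀ i, ‖a i‖ ≤ √(b i * c i)) :
    ∑ i ∈ s, ‖a i‖ ≤ √((∑ i ∈ s, b i) * ∑ i ∈ s, c i) :=
  (Finset.sum_le_sum fun i _ => h i).trans (Real.sum_sqrt_mul_le_sqrt_mul_sum s hb hc)

theorem summable_norm_of_le_sqrt_mul (hb : ∀ i, 0 ≤ b i) (hc : ∀ i, 0 ≤ c i)
    (h : ∀ i, ‖a i‖ ≤ √(b i * c i)) (hbs : Summable b) (hcs : Summable c) :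
    Summable fun i => ‖a i‖ :=
  (Real.summable_sqrt_mul hb hc hbs hcs).of_nonneg_of_le (fun _ => norm_nonneg _) h

theorem norm_tsum_le_sqrt_mul_tsum (hb : ∀ i, 0 ≤ b i) (hc : ∀ i, 0 ≤ c i)
    (h : ∀ i, ‖a i‖ ≤ √(b i * c i)) (hbs : Summable b) (hcs : Summable c) :
    ‖∑' i, a i‖ ≤ √((∑' i, b i) * ∑' i, c i) :=
  have ha := summable_norm_of_le_sqrt_mul hb hc h hbs hcs
  (norm_tsum_le_tsum_norm ha).trans <|
    (ha.tsum_le_tsum h (Real.summable_sqrt_mul hb hc hbs hcs)).trans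
      (Real.tsum_sqrt_mul_le_sqrt_mul_tsum hb hc hbs hcs)

end SqrtMulBound

namespace spectrum

variable {A : Type*} [NormedRing A] [NormedAlgebra ℂ A] [CompleteSpace A]

theorem spectralRadius_ne_top (a : A) : spectralRadius ℂ a ≠ ⊤ :=
  ne_top_of_le_ne_top (by finiteness) (spectralRadius_le_pow_nnnorm_pow_one_div ℂ a 0)

theorem summable_norm_pow_of_spectralRadius_lt_one {a : A} (h : spectralRadius ℂ a < 1) :
    Summable fun k => ‖a ^ k‖ := by
  obtain ⟨r, hρr, hr1⟩ := exists_between h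
  lift r to ℝ≥0 using ne_top_of_lt hr1
  refine .of_norm_bounded_eventually_nat
    (summable_geometric_of_lt_one r.coe_nonneg (by exact_mod_cast hr1)) ?_
  filter_upwards [(pow_nnnorm_pow_one_div_tendsto_nhds_spectralRadius a).eventually_lt_const hρr,
    eventually_gt_atTop 0] with k hk hk0
  rw [one_div, ENNReal.rpow_inv_lt_iff (by positivity), ENNReal.rpow_natCast] at hk
  rw [norm_norm]
  exact_mod_cast hk.le

theorem spectralRadius_le_sqrt_mul_of_norm_pow_le {a b c : A}
    (h : ∀ k : ℕ, ‖a ^ k‖ ≤ √(‖b ^ k‖ * ‖c ^ k‖)) :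
    spectralRadius ℂ a ≤ (spectralRadius ℂ b * spectralRadius ℂ c) ^ (1 / 2 : ℝ) := by
  have hbc := ((ENNReal.continuous_rpow_const (y := 1 / 2)).tendsto _).comp <|
    ENNReal.Tendsto.mul (pow_nnnorm_pow_one_div_tendsto_nhds_spectralRadius b)
      (.inr (spectralRadius_ne_top c)) (pow_nnnorm_pow_one_div_tendsto_nhds_spectralRadius c)
      (.inr (spectralRadius_ne_top b))
  refine le_of_tendsto_of_tendsto' (pow_nnnorm_pow_one_div_tendsto_nhds_spectralRadius a) hbc
    fun k => ?_
  have hk : (‖a ^ k‖₊ : ℝ≥0∞) ≤ ((‖b ^ k‖₊ : ℝ≥0∞) * ‖c ^ k‖₊) ^ (1 / 2 : ℝ) := by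
    rw [← ENNReal.coe_mul, ← ENNReal.coe_rpow_of_nonneg _ (by norm_num), ENNReal.coe_le_coe,
      ← NNReal.coe_le_coe, NNReal.coe_rpow, NNReal.coe_mul, coe_nnnorm, coe_nnnorm, coe_nnnorm,
      ← Real.sqrt_eq_rpow]
    exact h k
  calc (‖a ^ k‖₊ : ℝ≥0∞) ^ (1 / (k : ℝ))
      ≤ (((‖b ^ k‖₊ : ℝ≥0∞) * ‖c ^ k‖₊) ^ (1 / 2 : ℝ)) ^ (1 / (k : ℝ)) :=
        ENNReal.rpow_le_rpow hk (by positivity)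
    _ = _ := by
        rw [← ENNReal.rpow_mul, mul_comm (1 / 2 : ℝ), ENNReal.rpow_mul,
          ENNReal.mul_rpow_of_nonneg _ _ (by positivity)]
        rfl

end spectrum

namespace Matrix

section Summable

variable {ι m n R : Type*} [TopologicalSpace R] [AddCommMonoid R] {f : ι → Matrix m n R}

theorem summable_iff_summable_apply : Summable f ↔ ∀ i j, Summable fun k => f k i j :=
  Pi.summable.trans (forall_congr' fun _ => Pi.summable)

theorem tsum_apply [T2Space R] (hf : Summable f) (i : m) (j : n) :
    (∑' k, f k) i j = ∑' k, f k i j :=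
  (Pi.hasSum.1 (Pi.hasSum.1 hf.hasSum i) j).tsum_eq.symm

end Summable

section Neumann

variable {n R : Type*} [Fintype n] [DecidableEq n] [CommRing R] [TopologicalSpace R]
  [IsTopologicalRing R] [T2Space R] {M : Matrix n n R}

theorem inv_one_sub_eq_tsum_pow (h : Summable (M ^ ·)) : (1 - M)⁻¹ = ∑' k, M ^ k :=
  inv_eq_right_inv h.one_sub_mul_tsum_pow

theorem isUnit_one_sub_of_summable_pow (h : Summable (M ^ ·)) : IsUnit (1 - M) :=
  (isUnit_iff_isUnit_det _).2 (isUnit_det_of_right_inverse h.one_sub_mul_tsum_pow)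

end Neumann

structure DominatedByGeomMean {m n α : Type*} [Norm α] (A : Matrix m n α)
    (B C : Matrix m n ℝ) : Prop where
  nonneg_left : ∀ i j, 0 ≤ B i j
  nonneg_right : ∀ i j, 0 ≤ C i j
  norm_le : ∀ i j, ‖A i j‖ ≤ √(B i j * C i j)

namespace DominatedByGeomMean

variable {l m n α : Type*}

theorem one [DecidableEq n] [SeminormedRing α] [NormOneClass α] :
    DominatedByGeomMean (1 : Matrix n n α) 1 1 := by
  refine ⟨fun i j => ?_, fun i j => ?_, fun i j => ?_⟩ <;>
    rcases eq_or_ne i j with rfl | hij <;> simp [*]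

theorem mul [Fintype m] [SeminormedRing α] {A : Matrix l m α} {A' : Matrix m n α}
    {B C : Matrix l m ℝ} {B' C' : Matrix m n ℝ} (h : DominatedByGeomMean A B C)
    (h' : DominatedByGeomMean A' B' C') :
    DominatedByGeomMean (A * A') (B * B') (C * C') := by
  have hB i j k : 0 ≤ B i k * B' k j := mul_nonneg (h.nonneg_left i k) (h'.nonneg_left k j)
  have hC i j k : 0 ≤ C i k * C' k j := mul_nonneg (h.nonneg_right i k) (h'.nonneg_right k j)
  refine ⟨fun i j => Finset.sum_nonneg fun k _ => hB i j k,
    fun i j => Finset.sum_nonneg fun k _ => hC i j k, fun i j => ?_⟩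
  refine (norm_sum_le _ _).trans (sum_norm_le_sqrt_mul_sum _ (hB i j) (hC i j) fun k => ?_)
  calc ‖A i k * A' k j‖ ≤ √(B i k * C i k) * √(B' k j * C' k j) :=
        (norm_mul_le _ _).trans (mul_le_mul (h.norm_le i k) (h'.norm_le k j) (norm_nonneg _)
          (Real.sqrt_nonneg _))
    _ = √(B i k * B' k j * (C i k * C' k j)) := by
        rw [← Real.sqrt_mul (mul_nonneg (h.nonneg_left i k) (h.nonneg_right i k))]
        ring_nf

theorem pow [Fintype n] [DecidableEq n] [SeminormedRing α] [NormOneClass α]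
    {A : Matrix n n α} {B C : Matrix n n ℝ} (h : DominatedByGeomMean A B C) (k : ℕ) :
    DominatedByGeomMean (A ^ k) (B ^ k) (C ^ k) := by
  induction k with
  | zero => simpa only [pow_zero] using one
  | succ k ih => simpa only [pow_succ] using ih.mul h

theorem list_prod_ofFn [Fintype n] [DecidableEq n] [SeminormedRing α] [NormOneClass α] {N : ℕ}
    {A : Fin N → Matrix n n α} {B C : Fin N → Matrix n n ℝ}
    (h : ∀ l, DominatedByGeomMean (A l) (B l) (C l)) :
    DominatedByGeomMean (List.ofFn A).prod (List.ofFn B).prod (List.ofFn C).prod := by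
  induction N with
  | zero => simpa only [List.ofFn_zero, List.prod_nil] using one
  | succ N ih =>
      simpa only [List.ofFn_succ, List.prod_cons] using (h 0).mul (ih fun l => h l.succ)

theorem transpose [Norm α] {A : Matrix m n α} {B C : Matrix m n ℝ}
    (h : DominatedByGeomMean A B C) : DominatedByGeomMean Aᵀ Bᵀ Cᵀ :=
  ⟨fun i j => h.nonneg_left j i, fun i j => h.nonneg_right j i, fun i j => h.norm_le j i⟩

section Series

variable {ι : Type*} [NormedAddCommGroup α] {A : ι → Matrix m n α} {B C : ι → Matrix m n ℝ}

theorem summable [CompleteSpace α] (h : ∀ k, DominatedByGeomMean (A k) (B k) (C k))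
    (hB : Summable B) (hC : Summable C) : Summable A :=
  summable_iff_summable_apply.2 fun i j =>
    (summable_norm_of_le_sqrt_mul (fun k => (h k).nonneg_left i j)
      (fun k => (h k).nonneg_right i j) (fun k => (h k).norm_le i j)
      (summable_iff_summable_apply.1 hB i j) (summable_iff_summable_apply.1 hC i j)).of_norm

theorem tsum [CompleteSpace α] (h : ∀ k, DominatedByGeomMean (A k) (B k) (C k))
    (hB : Summable B) (hC : Summable C) :
    DominatedByGeomMean (∑' k, A k) (∑' k, B k) (∑' k, C k) := by
  have hBij := summable_iff_summable_apply.1 hB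
  have hCij := summable_iff_summable_apply.1 hC
  refine ⟨fun i j => ?_, fun i j => ?_, fun i j => ?_⟩ <;>
    simp only [Matrix.tsum_apply hB, Matrix.tsum_apply hC, Matrix.tsum_apply (summable h hB hC)]
  · exact tsum_nonneg fun k => (h k).nonneg_left i j
  · exact tsum_nonneg fun k => (h k).nonneg_right i j
  · exact norm_tsum_le_sqrt_mul_tsum (fun k => (h k).nonneg_left i j)
      (fun k => (h k).nonneg_right i j) (fun k => (h k).norm_le i j) (hBij i j) (hCij i j)

end Series

end DominatedByGeomMean

section LinftyOp

open scoped Matrix.Norms.Operator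

variable {m n α : Type*} [Fintype m] [Fintype n] [SeminormedAddCommGroup α]

theorem sum_norm_le_linfty_opNorm (A : Matrix m n α) (i : m) : ∑ j, ‖A i j‖ ≤ ‖A‖ := by
  simpa [linfty_opNorm_def] using
    NNReal.coe_le_coe.2 (Finset.le_sup (f := fun i => ∑ j, ‖A i j‖₊) (Finset.mem_univ i))

theorem norm_le_linfty_opNorm (A : Matrix m n α) (i : m) (j : n) : ‖A i j‖ ≤ ‖A‖ :=
  (Finset.single_le_sum (fun j _ => norm_nonneg (A i j)) (Finset.mem_univ j)).trans
    (sum_norm_le_linfty_opNorm A i)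

theorem linfty_opNorm_eq_iSup_sum (A : Matrix m n α) : ‖A‖ = ⨆ i, ∑ j, ‖A i j‖ := by
  refine le_antisymm ?_ (Real.iSup_le (sum_norm_le_linfty_opNorm A) (norm_nonneg A))
  change ‖fun i => WithLp.toLp 1 (A i)‖ ≤ _
  refine (pi_norm_le_iff_of_nonneg (Real.iSup_nonneg fun i =>
    Finset.sum_nonneg fun j _ => norm_nonneg (A i j))).2 fun i => ?_
  rw [PiLp.norm_eq_of_L1]
  exact le_ciSup (f := fun i => ∑ j, ‖A i j‖) (Set.finite_range _).bddAbove i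

theorem linfty_opNorm_map_ofReal (A : Matrix m n ℝ) : ‖A.map Complex.ofReal‖ = ‖A‖ := by
  simp only [linfty_opNorm_eq_iSup_sum, map_apply, Complex.norm_real]

theorem rowNorm_eq_linfty_opNorm {n : ℕ} (M : Matrix (Fin n) (Fin n) α) : rowNorm M = ‖M‖ :=
  (linfty_opNorm_eq_iSup_sum M).symm

theorem colNorm_eq_linfty_opNorm_transpose {n : ℕ} (M : Matrix (Fin n) (Fin n) α) :
    colNorm M = ‖Mᵀ‖ :=
  (linfty_opNorm_eq_iSup_sum Mᵀ).symm

end LinftyOp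

theorem map_ofReal_pow {n : Type*} [Fintype n] [DecidableEq n] (Q : Matrix n n ℝ) (k : ℕ) :
    Q.map Complex.ofReal ^ k = (Q ^ k).map Complex.ofReal :=
  (Q.map_pow Complex.ofRealHom k).symm

theorem summable_pow_of_spectralRadius_map_ofReal_lt_one {n : Type*} [Fintype n] [DecidableEq n]
    {Q : Matrix n n ℝ} (h : spectralRadius ℂ (Q.map Complex.ofReal) < 1) : Summable (Q ^ ·) :=
  -- Opened only locally: the topology of the `ℓ∞` norm is the product topology of `Matrix`, but
  -- not reducibly so, and the `Summable` here must stay in the product topology.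
  open scoped Matrix.Norms.Operator in
  summable_iff_summable_apply.2 fun i j =>
    (spectrum.summable_norm_pow_of_spectralRadius_lt_one h).of_norm_bounded fun k => by
      simpa only [map_ofReal_pow, linfty_opNorm_map_ofReal] using norm_le_linfty_opNorm (Q ^ k) i j

namespace DominatedByGeomMean

open scoped Matrix.Norms.Operator

variable {m n α : Type*} [SeminormedAddCommGroup α]

theorem linfty_opNorm_le [Fintype m] [Fintype n] {A : Matrix m n α} {B C : Matrix m n ℝ}
    (h : DominatedByGeomMean A B C) : ‖A‖ ≤ √(‖B‖ * ‖C‖) := by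
  have hrow {D : Matrix m n ℝ} (hD : ∀ i j, 0 ≤ D i j) (i : m) : ∑ j, D i j ≤ ‖D‖ := by
    simpa only [Real.norm_of_nonneg (hD i _)] using sum_norm_le_linfty_opNorm D i
  rw [linfty_opNorm_eq_iSup_sum]
  refine Real.iSup_le (fun i => ?_) (Real.sqrt_nonneg _)
  exact (sum_norm_le_sqrt_mul_sum _ (h.nonneg_left i) (h.nonneg_right i) (h.norm_le i)).trans <|
    Real.sqrt_le_sqrt <| mul_le_mul (hrow h.nonneg_left i) (hrow h.nonneg_right i)
      (Finset.sum_nonneg fun j _ => h.nonneg_right i j) (norm_nonneg _)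

theorem rowNorm_le {n : ℕ} {A : Matrix (Fin n) (Fin n) α} {B C : Matrix (Fin n) (Fin n) ℝ}
    (h : DominatedByGeomMean A B C) : rowNorm A ≤ √(rowNorm B * rowNorm C) := by
  simpa only [rowNorm_eq_linfty_opNorm] using h.linfty_opNorm_le

theorem colNorm_le {n : ℕ} {A : Matrix (Fin n) (Fin n) α} {B C : Matrix (Fin n) (Fin n) ℝ}
    (h : DominatedByGeomMean A B C) : colNorm A ≤ √(colNorm B * colNorm C) := by
  simpa only [colNorm_eq_linfty_opNorm_transpose] using h.transpose.linfty_opNorm_le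

theorem spectralRadius_le [Fintype n] [DecidableEq n] {P : Matrix n n ℂ} {Q R : Matrix n n ℝ}
    (h : DominatedByGeomMean P Q R) :
    spectralRadius ℂ P ≤ (spectralRadius ℂ (Q.map Complex.ofReal) *
      spectralRadius ℂ (R.map Complex.ofReal)) ^ (1 / 2 : ℝ) :=
  spectrum.spectralRadius_le_sqrt_mul_of_norm_pow_le fun k => by
    simpa only [map_ofReal_pow, linfty_opNorm_map_ofReal] using (h.pow k).linfty_opNorm_le

end DominatedByGeomMean

end Matrix

theorem product_domination_spectral_radius_general
    (n N : ℕ)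
    (A : Fin N → Matrix (Fin n) (Fin n) ℂ)
    (B C : Fin N → Matrix (Fin n) (Fin n) ℝ)
    (hB : ∀ l i j, 0 ≤ B l i j) (hC : ∀ l i j, 0 ≤ C l i j)
    (hdom : ∀ l i j, ‖A l i j‖ ≤ Real.sqrt (B l i j * C l i j)) :
    (∀ i j, ‖(List.ofFn A).prod i j‖ ≤
        Real.sqrt ((List.ofFn B).prod i j * (List.ofFn C).prod i j)) ∧
    specRad (List.ofFn A).prod ≤
      (specRad ((List.ofFn B).prod.map (Complex.ofReal)) *
        specRad ((List.ofFn C).prod.map (Complex.ofReal))) ^ (1 / 2 : ℝ) ∧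
    (max (specRad ((List.ofFn B).prod.map (Complex.ofReal)))
        (specRad ((List.ofFn C).prod.map (Complex.ofReal))) < 1 →
      IsUnit ((1 : Matrix (Fin n) (Fin n) ℂ) - (List.ofFn A).prod) ∧
      IsUnit ((1 : Matrix (Fin n) (Fin n) ℝ) - (List.ofFn B).prod) ∧
      IsUnit ((1 : Matrix (Fin n) (Fin n) ℝ) - (List.ofFn C).prod) ∧
      rowNorm ((1 - (List.ofFn A).prod)⁻¹) ≤
        Real.sqrt (rowNorm ((1 - (List.ofFn B).prod)⁻¹) *
          rowNorm ((1 - (List.ofFn C).prod)⁻¹)) ∧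
      colNorm ((1 - (List.ofFn A).prod)⁻¹) ≤
        Real.sqrt (colNorm ((1 - (List.ofFn B).prod)⁻¹) *
          colNorm ((1 - (List.ofFn C).prod)⁻¹))) := by
  have hprod := DominatedByGeomMean.list_prod_ofFn fun l => ⟨hB l, hC l, hdom l⟩
  refine ⟨hprod.norm_le, hprod.spectralRadius_le, fun hρ => ?_⟩
  have hQ := summable_pow_of_spectralRadius_map_ofReal_lt_one ((le_max_left _ _).trans_lt hρ)
  have hR := summable_pow_of_spectralRadius_map_ofReal_lt_one ((le_max_right _ _).trans_lt hρ)
  have hP := DominatedByGeomMean.summable hprod.pow hQ hR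
  have hinv : DominatedByGeomMean (1 - (List.ofFn A).prod)⁻¹ (1 - (List.ofFn B).prod)⁻¹
      (1 - (List.ofFn C).prod)⁻¹ := by
    rw [inv_one_sub_eq_tsum_pow hP, inv_one_sub_eq_tsum_pow hQ, inv_one_sub_eq_tsum_pow hR]
    exact .tsum hprod.pow hQ hR
  exact ⟨isUnit_one_sub_of_summable_pow hP, isUnit_one_sub_of_summable_pow hQ,
    isUnit_one_sub_of_summable_pow hR, hinv.rowNorm_le, hinv.colNorm_le⟩

/-- If `|[A_l]_{ij}| ≤ √([B_l]_{ij} [C_l]_{ij})` entrywise, with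
`B_l, C_l` nonnegative, then the products `A = A₁⋯A_N`, `B = B₁⋯B_N`, `C = C₁⋯C_N`
satisfy the same domination, `ρ(A) ≤ √(ρ(B)ρ(C))`, and if `max(ρ(B), ρ(C)) < 1`
then `I − A`, `I − B`, `I − C` are invertible with
`‖(I−A)⁻¹‖_∞ ≤ √(‖(I−B)⁻¹‖_∞ ‖(I−C)⁻¹‖_∞)` and similarly for `‖·‖₁`. -/
theorem product_domination_spectral_radius
    (n N : ℕ) (hN : 0 < N)
    (A : Fin N → Matrix (Fin n) (Fin n) ℂ)
    (B C : Fin N → Matrix (Fin n) (Fin n) ℝ)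
    (hB : ∀ l i j, 0 ≤ B l i j) (hC : ∀ l i j, 0 ≤ C l i j)
    (hdom : ∀ l i j, ‖A l i j‖ ≤ Real.sqrt (B l i j * C l i j)) :
    (∀ i j, ‖(List.ofFn A).prod i j‖ ≤
        Real.sqrt ((List.ofFn B).prod i j * (List.ofFn C).prod i j)) ∧
    specRad (List.ofFn A).prod ≤
      (specRad ((List.ofFn B).prod.map (Complex.ofReal)) *
        specRad ((List.ofFn C).prod.map (Complex.ofReal))) ^ (1 / 2 : ℝ) ∧
    (max (specRad ((List.ofFn B).prod.map (Complex.ofReal)))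
        (specRad ((List.ofFn C).prod.map (Complex.ofReal))) < 1 →
      IsUnit ((1 : Matrix (Fin n) (Fin n) ℂ) - (List.ofFn A).prod) ∧
      IsUnit ((1 : Matrix (Fin n) (Fin n) ℝ) - (List.ofFn B).prod) ∧
      IsUnit ((1 : Matrix (Fin n) (Fin n) ℝ) - (List.ofFn C).prod) ∧
      rowNorm ((1 - (List.ofFn A).prod)⁻¹) ≤
        Real.sqrt (rowNorm ((1 - (List.ofFn B).prod)⁻¹) *
          rowNorm ((1 - (List.ofFn C).prod)⁻¹)) ∧
      colNorm ((1 - (List.ofFn A).prod)⁻¹) ≤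
        Real.sqrt (colNorm ((1 - (List.ofFn B).prod)⁻¹) *
          colNorm ((1 - (List.ofFn C).prod)⁻¹))) :=
  product_domination_spectral_radius_general n N A B C hB hC hdom

end
end

section
/- Let A_l ∈ ℂ^{n×n} (1 ≤ l ≤ N) be Hermitian positive semidefinite matrices, and let a_l ∈ ℂ and b_l ∈ ℝ satisfy |a_l| ≤ b_l for every l. Then ‖ Σ_{l=1}^N a_l A_l ‖ ≤ ‖ Σ_{l=1}^N b_l A_l ‖, where ‖·‖ is the spectral norm. -/
/-
For a positive operator `T`, `(x, y) ↦ ⟪T x, y⟫` is a semi-inner product, so Cauchy–Schwarz gives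
`‖⟪T x, y⟫‖ ≤ √⟪T x, x⟫ √⟪T y, y⟫`. Summing, and applying Cauchy–Schwarz once more to the sum,
`‖⟪(∑ aᵢ Tᵢ) x, y⟫‖ ≤ ∑ bᵢ √⟪Tᵢ x, x⟫ √⟪Tᵢ y, y⟫ ≤ √⟪S x, x⟫ √⟪S y, y⟫` with `S = ∑ bᵢ Tᵢ`,
and for unit vectors `x`, `y` the right-hand side is at most `‖S‖`.
-/

open Matrix
open scoped ComplexOrder

noncomputable section

noncomputable def specNorm {m n : ℕ} (M : Matrix (Fin m) (Fin n) ℂ) : ℝ :=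
  ‖LinearMap.toContinuousLinearMap (Matrix.toEuclideanLin M)‖

open scoped InnerProductSpace
open RCLike

namespace ContinuousLinearMap

variable {𝕜 E : Type*} [RCLike 𝕜] [NormedAddCommGroup E] [InnerProductSpace 𝕜 E]

@[reducible]
def IsPositive.preInnerProductCore {T : E →L[𝕜] E} (hT : T.IsPositive) :
    PreInnerProductSpace.Core 𝕜 E where
  inner x y := ⟪T x, y⟫_𝕜
  conj_inner_symm x y := by
    rw [inner_conj_symm]
    exact (hT.inner_left_eq_inner_right x y).symm
  re_inner_nonneg := hT.re_inner_nonneg_left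
  add_left x y z := by rw [map_add, inner_add_left]
  smul_left x y r := by rw [map_smul, inner_smul_left]

theorem IsPositive.norm_inner_le_sqrt_mul_sqrt {T : E →L[𝕜] E} (hT : T.IsPositive) (x y : E) :
    ‖⟪T x, y⟫_𝕜‖ ≤ √(re ⟪T x, x⟫_𝕜) * √(re ⟪T y, y⟫_𝕜) := by
  have h := InnerProductSpace.Core.inner_mul_inner_self_le (c := hT.preInnerProductCore) x y
  change ‖⟪T x, y⟫_𝕜‖ * ‖⟪T y, x⟫_𝕜‖ ≤ re ⟪T x, x⟫_𝕜 * re ⟪T y, y⟫_𝕜 at h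
  rw [← Real.sqrt_mul (hT.re_inner_nonneg_left x)]
  refine Real.le_sqrt_of_sq_le ?_
  rwa [hT.inner_left_eq_inner_right y x, norm_inner_symm y, ← sq] at h

variable {ι : Type*} [Fintype ι] {T : ι → E →L[𝕜] E}

theorem re_inner_sum_smul_apply_self (b : ι → ℝ) (x : E) :
    re ⟪(∑ i, (b i : 𝕜) • T i) x, x⟫_𝕜 = ∑ i, b i * re ⟪T i x, x⟫_𝕜 := by
  simp [sum_inner, inner_smul_left]

theorem norm_inner_sum_smul_apply_le (hT : ∀ i, (T i).IsPositive) {a : ι → 𝕜} {b : ι → ℝ}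
    (hab : ∀ i, ‖a i‖ ≤ b i) (x y : E) :
    ‖⟪(∑ i, a i • T i) x, y⟫_𝕜‖ ≤
      √(re ⟪(∑ i, (b i : 𝕜) • T i) x, x⟫_𝕜) * √(re ⟪(∑ i, (b i : 𝕜) • T i) y, y⟫_𝕜) := by
  have hb i : 0 ≤ b i := (norm_nonneg _).trans (hab i)
  rw [re_inner_sum_smul_apply_self, re_inner_sum_smul_apply_self]
  calc ‖⟪(∑ i, a i • T i) x, y⟫_𝕜‖ ≤ ∑ i, ‖a i‖ * ‖⟪T i x, y⟫_𝕜‖ := by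
        rw [_root_.sum_apply, sum_inner]
        refine (norm_sum_le _ _).trans_eq ?_
        simp [inner_smul_left]
    _ ≤ ∑ i, √(b i * re ⟪T i x, x⟫_𝕜) * √(b i * re ⟪T i y, y⟫_𝕜) := by
        refine Finset.sum_le_sum fun i _ => ?_
        rw [Real.sqrt_mul (hb i), Real.sqrt_mul (hb i), mul_mul_mul_comm,
          Real.mul_self_sqrt (hb i)]
        exact mul_le_mul (hab i) ((hT i).norm_inner_le_sqrt_mul_sqrt x y) (norm_nonneg _) (hb i)
    _ ≤ _ := Real.sum_sqrt_mul_sqrt_le _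
        (fun i => mul_nonneg (hb i) ((hT i).re_inner_nonneg_left x))
        (fun i => mul_nonneg (hb i) ((hT i).re_inner_nonneg_left y))

theorem norm_sum_smul_le_of_isPositive (hT : ∀ i, (T i).IsPositive) {a : ι → 𝕜} {b : ι → ℝ}
    (hab : ∀ i, ‖a i‖ ≤ b i) :
    ‖∑ i, a i • T i‖ ≤ ‖∑ i, (b i : 𝕜) • T i‖ := by
  set S := ∑ i, (b i : 𝕜) • T i
  have hS (z : E) (hz : ‖z‖ = 1) : re ⟪S z, z⟫_𝕜 ≤ ‖S‖ := by
    calc re ⟪S z, z⟫_𝕜 ≤ ‖S z‖ * ‖z‖ := re_inner_le_norm _ _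
      _ ≤ ‖S‖ * ‖z‖ * ‖z‖ := by gcongr; exact S.le_opNorm z
      _ = ‖S‖ := by rw [hz, mul_one, mul_one]
  refine opNorm_le_of_re_inner_le (norm_nonneg S) fun x y hx hy => ?_
  calc re ⟪(∑ i, a i • T i) x, y⟫_𝕜 ≤ ‖⟪(∑ i, a i • T i) x, y⟫_𝕜‖ := re_le_norm _
    _ ≤ √(re ⟪S x, x⟫_𝕜) * √(re ⟪S y, y⟫_𝕜) := norm_inner_sum_smul_apply_le hT hab x y
    _ ≤ √‖S‖ * √‖S‖ := by gcongr <;> exact hS _ ‹_›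
    _ = ‖S‖ := Real.mul_self_sqrt (norm_nonneg S)

end ContinuousLinearMap

theorem specNorm_eq_norm_toEuclideanCLM {n : ℕ} (M : Matrix (Fin n) (Fin n) ℂ) :
    specNorm M = ‖toEuclideanCLM (n := Fin n) (𝕜 := ℂ) M‖ := rfl

/-- If `A_l` are Hermitian positive semidefinite and `|a_l| ≤ b_l`,
then `‖Σ a_l A_l‖ ≤ ‖Σ b_l A_l‖` in spectral norm. -/
theorem specNorm_sum_smul_posSemidef_le
    (n N : ℕ) (A : Fin N → Matrix (Fin n) (Fin n) ℂ)
    (hA : ∀ l, (A l).PosSemidef)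
    (a : Fin N → ℂ) (b : Fin N → ℝ) (hab : ∀ l, ‖a l‖ ≤ b l) :
    specNorm (∑ l, a l • A l) ≤ specNorm (∑ l, (b l : ℂ) • A l) := by
  have hT l : (toEuclideanCLM (n := Fin n) (𝕜 := ℂ) (A l)).IsPositive :=
    isPositive_toEuclideanLin_iff.mpr (hA l)
  simp only [specNorm_eq_norm_toEuclideanCLM, map_sum, map_smul]
  exact ContinuousLinearMap.norm_sum_smul_le_of_isPositive hT hab

end
end

section
/- Let (X_{ij})_{i,j≥1} be a doubly indexed family of i.i.d. complex random variables with E|X_{11}|^{4+ε} < ∞ for some ε ∈ (0, 1/4], and set α = ε/(8+2ε). Under Assumption 1, for each n let Σ(n) = A(n) + n^{-1/2}[B₁x₁, …, B_n x_n] (with [x_j]_i = X_{ij}) and let Σ̂(n) be defined in the same way but with X_{ij} replaced by the truncated variables X̂_{ij,n} = X_{ij}·1{|X_{ij}| ≤ n^{1/2−α}}. Then P( Σ(n) ≠ Σ̂(n) for infinitely many n ) = 0. -/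
/-!
Since `1/2 - ε/(8+2ε) = 2/(4+ε)`, the matrices `Σ(n)` and `Σ̂(n)` can differ only if some entry
`X_ij` with `i < d_j ≤ C n`, `j < n` exceeds `n^{2/(4+ε)}`. Group the indices `n` into dyadic
blocks `2^k ≤ n < 2^{k+1}`: a block contains such an `n` only if one of the at most `4C·4^k`
variables `X_ij` with `i < C 2^{k+1}`, `j < 2^{k+1}` exceeds `2^{2k/(4+ε)}`, which by a union bound
has probability at most `4C·4^k P(|X_11|^{4+ε} > 4^k)`. Comparing with a geometric series,
`∑_k 4^k P(Y > 4^k) ≤ 2 E Y` for `Y ≥ 0`, so these probabilities are summable when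
`E|X_11|^{4+ε} < ∞`, and by Borel–Cantelli almost surely only finitely many blocks fail.
-/

open MeasureTheory ProbabilityTheory Filter Matrix

noncomputable section

/-- Euclidean norm of a complex vector. -/
noncomputable def evNorm {p : ℕ} (v : Fin p → ℂ) : ℝ :=
  Real.sqrt (∑ i, ‖v i‖ ^ 2)

variable {W : Type*}

/-- The double array `(X_{ij})` is i.i.d. -/
def IIDArray [MeasurableSpace W] (P : Measure W) (X : ℕ → ℕ → W → ℂ) : Prop :=
  (∀ i j, Measurable (X i j)) ∧
    iIndepFun (fun q : ℕ × ℕ => X q.1 q.2) P ∧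
    ∀ i j, IdentDistrib (X i j) (X 0 0) P P

/-- The random matrix `Σ(n) = A(n) + n^{-1/2}[B₁x₁, …, B_n x_n]`, with per-`n`
entry array `X n i j` (as needed after truncation). -/
noncomputable def SigmaMatT (p : ℕ → ℕ) (d : (n : ℕ) → Fin n → ℕ)
    (B : (n : ℕ) → (j : Fin n) → Matrix (Fin (p n)) (Fin (d n j)) ℂ)
    (A : (n : ℕ) → Matrix (Fin (p n)) (Fin n) ℂ)
    (X : ℕ → ℕ → ℕ → W → ℂ) (n : ℕ) (ω : W) : Matrix (Fin (p n)) (Fin n) ℂ :=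
  A n + Matrix.of fun a j =>
    (Real.sqrt n : ℂ)⁻¹ * ((B n j).mulVec (fun i => X n (i : ℕ) (j : ℕ) ω) a)

/-- The resolvent `Q(z) = (Σ Σᴴ − z I_p)⁻¹`. -/
noncomputable def QmatT (p : ℕ → ℕ) (d : (n : ℕ) → Fin n → ℕ)
    (B : (n : ℕ) → (j : Fin n) → Matrix (Fin (p n)) (Fin (d n j)) ℂ)
    (A : (n : ℕ) → Matrix (Fin (p n)) (Fin n) ℂ)
    (X : ℕ → ℕ → ℕ → W → ℂ) (z : ℂ) (n : ℕ) (ω : W) :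
    Matrix (Fin (p n)) (Fin (p n)) ℂ :=
  (SigmaMatT p d B A X n ω * (SigmaMatT p d B A X n ω)ᴴ - z • 1)⁻¹

open scoped ENNReal

theorem sum_range_succ_four_pow_le (N : ℕ) : ∑ k ∈ Finset.range (N + 1), 4 ^ k ≤ 2 * 4 ^ N := by
  induction N with
  | zero => simp
  | succ N ih =>
    rw [Finset.sum_range_succ, pow_succ]
    omega

theorem ENNReal.tsum_four_pow_ite_lt_le (y : ℝ≥0∞) :
    ∑' k : ℕ, (if (4 : ℝ≥0∞) ^ k < y then (4 : ℝ≥0∞) ^ k else 0) ≤ 2 * y := by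
  refine ENNReal.tsum_le_of_sum_range_le fun N => ?_
  induction N with
  | zero => simp
  | succ N ih =>
    by_cases hN : (4 : ℝ≥0∞) ^ N < y
    · calc ∑ k ∈ Finset.range (N + 1), (if (4 : ℝ≥0∞) ^ k < y then (4 : ℝ≥0∞) ^ k else 0)
          ≤ ∑ k ∈ Finset.range (N + 1), (4 : ℝ≥0∞) ^ k :=
            Finset.sum_le_sum fun k _ => by split_ifs <;> simp
        _ ≤ 2 * 4 ^ N := by exact_mod_cast sum_range_succ_four_pow_le N
        _ ≤ 2 * y := by gcongr
    · simpa [Finset.sum_range_succ, hN] using ih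

section

variable {Ω : Type*} [MeasurableSpace Ω] {μ : Measure Ω}

theorem tsum_four_pow_mul_measure_lt_le {f : Ω → ℝ≥0∞} (hf : Measurable f) :
    ∑' k : ℕ, 4 ^ k * μ {ω | 4 ^ k < f ω} ≤ 2 * ∫⁻ ω, f ω ∂μ := by
  have hmeas (k : ℕ) : MeasurableSet {ω | (4 : ℝ≥0∞) ^ k < f ω} :=
    measurableSet_lt measurable_const hf
  calc ∑' k : ℕ, 4 ^ k * μ {ω | 4 ^ k < f ω}
      = ∑' k : ℕ, ∫⁻ ω, {ω | (4 : ℝ≥0∞) ^ k < f ω}.indicator (fun _ => 4 ^ k) ω ∂μ := by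
        simp_rw [lintegral_indicator_const (hmeas _)]
    _ = ∫⁻ ω, ∑' k : ℕ, {ω | (4 : ℝ≥0∞) ^ k < f ω}.indicator (fun _ => 4 ^ k) ω ∂μ :=
        (lintegral_tsum fun k => (measurable_const.indicator (hmeas k)).aemeasurable).symm
    _ ≤ ∫⁻ ω, 2 * f ω ∂μ := lintegral_mono fun ω => by
        simpa only [Set.indicator_apply, Set.mem_ofPred_eq] using
          ENNReal.tsum_four_pow_ite_lt_le (f ω)
    _ = 2 * ∫⁻ ω, f ω ∂μ := lintegral_const_mul 2 hf

theorem tsum_four_pow_mul_measure_rpow_lt_ne_top {g : Ω → ℝ} (hg : Measurable g) {r : ℝ}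
    (hr : 0 < r) (hint : Integrable (fun ω => g ω ^ r) μ) :
    ∑' k : ℕ, 4 ^ k * μ {ω | ((2 : ℝ) ^ k) ^ (2 / r) < g ω} ≠ ∞ := by
  have hsub (k : ℕ) : {ω | ((2 : ℝ) ^ k) ^ (2 / r) < g ω} ⊆
      {ω | (4 : ℝ≥0∞) ^ k < ENNReal.ofReal (g ω ^ r)} := fun ω hω => by
    have hpow : (((2 : ℝ) ^ k) ^ (2 / r)) ^ r = 4 ^ k := by
      rw [← Real.rpow_mul (by positivity), div_mul_cancel₀ _ hr.ne', Real.rpow_two, ← pow_mul,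
        mul_comm, pow_mul]
      norm_num
    have hlt := Real.rpow_lt_rpow (by positivity) hω hr
    rw [hpow] at hlt
    have hlt' := (ENNReal.ofReal_lt_ofReal_iff_of_nonneg (by positivity)).2 hlt
    rwa [ENNReal.ofReal_pow (by norm_num), ENNReal.ofReal_ofNat] at hlt'
  refine ne_top_of_le_ne_top
    (ENNReal.mul_ne_top (ENNReal.ofNat_ne_top (n := 2)) hint.lintegral_lt_top.ne) ?_
  calc ∑' k : ℕ, 4 ^ k * μ {ω | ((2 : ℝ) ^ k) ^ (2 / r) < g ω}
      ≤ ∑' k : ℕ, 4 ^ k * μ {ω | (4 : ℝ≥0∞) ^ k < ENNReal.ofReal (g ω ^ r)} :=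
        ENNReal.tsum_le_tsum fun k => mul_le_mul' le_rfl (measure_mono (hsub k))
    _ ≤ 2 * ∫⁻ ω, ENNReal.ofReal (g ω ^ r) ∂μ :=
        tsum_four_pow_mul_measure_lt_le (hg.pow_const r).ennreal_ofReal

theorem measure_exists_lt_lt_le_of_identDistrib {E : Type*} [MeasurableSpace E]
    {X : ℕ → ℕ → Ω → E} {Y : Ω → E} (hX : ∀ i j, IdentDistrib (X i j) Y μ μ) {s : Set E}
    (hs : MeasurableSet s) (a b : ℕ) :
    μ {ω | ∃ i < a, ∃ j < b, X i j ω ∈ s} ≤ (a * b : ℕ) * μ (Y ⁻¹' s) :=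
  calc μ {ω | ∃ i < a, ∃ j < b, X i j ω ∈ s}
      = μ (⋃ i ∈ Finset.range a, ⋃ j ∈ Finset.range b, X i j ⁻¹' s) := by
        congr 1; ext; simp
    _ ≤ ∑ i ∈ Finset.range a, ∑ j ∈ Finset.range b, μ (X i j ⁻¹' s) :=
        (measure_biUnion_finset_le _ _).trans
          (Finset.sum_le_sum fun i _ => measure_biUnion_finset_le _ _)
    _ = (a * b : ℕ) * μ (Y ⁻¹' s) := by
        simp [(hX _ _).measure_mem_eq hs, mul_assoc]

theorem ae_eventually_forall_norm_le_rpow {E : Type*} [NormedAddCommGroup E] [MeasurableSpace E]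
    [OpensMeasurableSpace E] {X : ℕ → ℕ → Ω → E} {Y : Ω → E} (hY : Measurable Y)
    (hX : ∀ i j, IdentDistrib (X i j) Y μ μ) {r : ℝ} (hr : 0 < r)
    (hmom : Integrable (fun ω => ‖Y ω‖ ^ r) μ) (D : ℕ) :
    ∀ᵐ ω ∂μ, ∀ᶠ n in atTop, ∀ i < D * n, ∀ j < n, ‖X i j ω‖ ≤ (n : ℝ) ^ (2 / r) := by
  set large : ℕ → Set E := fun k => {x | ((2 : ℝ) ^ k) ^ (2 / r) < ‖x‖}
  have hlarge (k : ℕ) : MeasurableSet (large k) :=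
    measurableSet_lt measurable_const measurable_norm
  set block : ℕ → Set Ω := fun k =>
    {ω | ∃ i < D * 2 ^ (k + 1), ∃ j < 2 ^ (k + 1), X i j ω ∈ large k}
  have hcard (k : ℕ) : D * 2 ^ (k + 1) * 2 ^ (k + 1) = 4 * D * 4 ^ k := by
    rw [show 4 = 2 ^ 2 by rfl, ← pow_mul]; ring
  have hblock : ∑' k, μ (block k) ≠ ∞ := by
    refine ne_top_of_le_ne_top (ENNReal.mul_ne_top (ENNReal.natCast_ne_top (4 * D))
      (tsum_four_pow_mul_measure_rpow_lt_ne_top hY.norm hr hmom)) ?_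
    calc ∑' k, μ (block k)
        ≤ ∑' k, (4 * D : ℕ) * (4 ^ k * μ (Y ⁻¹' large k)) := by
          refine ENNReal.tsum_le_tsum fun k => ?_
          refine (measure_exists_lt_lt_le_of_identDistrib hX (hlarge k) _ _).trans_eq ?_
          rw [hcard]; push_cast; ring
      _ = (4 * D : ℕ) * ∑' k, 4 ^ k * μ {ω | ((2 : ℝ) ^ k) ^ (2 / r) < ‖Y ω‖} :=
        ENNReal.tsum_mul_left
  filter_upwards [ae_eventually_notMem hblock] with ω hω
  obtain ⟨K, hK⟩ := eventually_atTop.1 hω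
  filter_upwards [eventually_ge_atTop (2 ^ K)] with n hn i hi j hj
  by_contra! hlt
  set k := Nat.log 2 n
  have hn0 : n ≠ 0 := ((pow_pos two_pos K).trans_le hn).ne'
  have hlow : 2 ^ k ≤ n := Nat.pow_log_le_self 2 hn0
  have hup : n < 2 ^ (k + 1) := Nat.lt_pow_succ_log_self (by norm_num) n
  have hKk : K ≤ k := Nat.le_log_of_pow_le (by norm_num) hn
  refine hK k hKk ⟨i, hi.trans_le (by gcongr), j, hj.trans hup, ?_⟩
  calc ((2 : ℝ) ^ k) ^ (2 / r) ≤ (n : ℝ) ^ (2 / r) := by gcongr; exact_mod_cast hlow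
    _ < ‖X i j ω‖ := hlt

end

theorem sigmaMatT_congr (p : ℕ → ℕ) (d : (n : ℕ) → Fin n → ℕ)
    (B : (n : ℕ) → (j : Fin n) → Matrix (Fin (p n)) (Fin (d n j)) ℂ)
    (A : (n : ℕ) → Matrix (Fin (p n)) (Fin n) ℂ) {X Y : ℕ → ℕ → ℕ → W → ℂ} {n : ℕ} {ω : W}
    (h : ∀ (j : Fin n) (i : Fin (d n j)), X n i j ω = Y n i j ω) :
    SigmaMatT p d B A X n ω = SigmaMatT p d B A Y n ω := by
  unfold SigmaMatT
  congr 1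
  ext a j
  simp only [Matrix.of_apply]
  congr 2
  funext i
  exact h j i

theorem truncation_eventually_equal_general
    [MeasurableSpace W] (P : Measure W)
    (p : ℕ → ℕ) (d : (n : ℕ) → Fin n → ℕ)
    (B : (n : ℕ) → (j : Fin n) → Matrix (Fin (p n)) (Fin (d n j)) ℂ)
    (A : (n : ℕ) → Matrix (Fin (p n)) (Fin n) ℂ)
    (X : ℕ → ℕ → W → ℂ)
    (hiid : IIDArray P X)
    (ε : ℝ) (hε0 : 0 < ε)
    (hmom : Integrable (fun ω => ‖X 0 0 ω‖ ^ (4 + ε)) P)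
    -- Assumption 1: proportional growth of dimensions
    (c₁ C₁ : ℝ)
    (hd : ∀ᶠ n in atTop, ∀ j : Fin n, c₁ ≤ (d n j : ℝ) / n ∧ (d n j : ℝ) / n ≤ C₁) :
    P {ω | ∃ᶠ n in atTop,
        SigmaMatT p d B A (fun _ i j => X i j) n ω ≠
          SigmaMatT p d B A
            (fun n i j ω' =>
              if ‖X i j ω'‖ ≤ (n : ℝ) ^ ((1 : ℝ) / 2 - ε / (8 + 2 * ε)) then X i j ω' else 0)
            n ω} = 0 := by
  obtain ⟨hmeas, -, hident⟩ := hiid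
  have hexp : (1 : ℝ) / 2 - ε / (8 + 2 * ε) = 2 / (4 + ε) := by field_simp; ring
  have hdim : ∀ᶠ n in atTop, ∀ j : Fin n, d n j ≤ ⌈C₁⌉₊ * n := by
    filter_upwards [hd, eventually_gt_atTop 0] with n hn hn0 j
    have hle : (d n j : ℝ) ≤ C₁ * n := (div_le_iff₀ (by positivity)).1 (hn j).2
    exact_mod_cast hle.trans (mul_le_mul_of_nonneg_right (Nat.le_ceil C₁) n.cast_nonneg)
  have hsmall :=
    ae_eventually_forall_norm_le_rpow (hmeas 0 0) hident (by positivity) hmom ⌈C₁⌉₊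
  rw [measure_eq_zero_iff_ae_notMem]
  filter_upwards [hsmall] with ω hω
  simp only [not_frequently, not_not, hexp]
  filter_upwards [hω, hdim] with n hsmall hdim
  exact sigmaMatT_congr p d B A fun j i =>
    (if_pos (hsmall i (i.2.trans_le (hdim j)) j j.2)).symm

/-- With `α = ε/(8+2ε)` and `X̂_{ij,n} = X_{ij} 1{|X_{ij}| ≤ n^{1/2−α}}`,
the event `{Σ(n) ≠ Σ̂(n) for infinitely many n}` has probability `0`. -/
theorem truncation_eventually_equal
    [MeasurableSpace W] (P : Measure W) [IsProbabilityMeasure P]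
    (p : ℕ → ℕ) (d : (n : ℕ) → Fin n → ℕ)
    (B : (n : ℕ) → (j : Fin n) → Matrix (Fin (p n)) (Fin (d n j)) ℂ)
    (A : (n : ℕ) → Matrix (Fin (p n)) (Fin n) ℂ)
    (X : ℕ → ℕ → W → ℂ)
    (hiid : IIDArray P X)
    (ε : ℝ) (hε0 : 0 < ε) (hε1 : ε ≤ 1 / 4)
    (hmom : Integrable (fun ω => ‖X 0 0 ω‖ ^ (4 + ε)) P)
    -- Assumption 1: proportional growth of dimensions
    (c₁ C₁ : ℝ) (hc₁ : 0 < c₁)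
    (hd : ∀ᶠ n in atTop, ∀ j : Fin n, c₁ ≤ (d n j : ℝ) / n ∧ (d n j : ℝ) / n ≤ C₁)
    (hp : ∀ᶠ n in atTop, c₁ ≤ (p n : ℝ) / n ∧ (p n : ℝ) / n ≤ C₁) :
    P {ω | ∃ᶠ n in atTop,
        SigmaMatT p d B A (fun _ i j => X i j) n ω ≠
          SigmaMatT p d B A
            (fun n i j ω' =>
              if ‖X i j ω'‖ ≤ (n : ℝ) ^ ((1 : ℝ) / 2 - ε / (8 + 2 * ε)) then X i j ω' else 0)
            n ω} = 0 :=
  truncation_eventually_equal_general P p d B A X hiid ε hε0 hmom c₁ C₁ hd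

end
end

section
/- Let X be a complex random variable with E|X|^{4+ε} < ∞ for some ε > 0, and set α = ε/(8+2ε). Then for every β ∈ [1, 4+ε] and every positive integer n: E| X − X·1{|X| ≤ n^{1/2−α}} |^β ≤ ( (4+ε+β)/(4+ε) ) · E|X|^{4+ε} · n^{−(2 − (1/2−α)β)}. -/
/-!
Statement 19 (truncation moment bound for a single complex random variable).
-/

open MeasureTheory

noncomputable section

/-- If `E|X|^{4+ε} < ∞` and `α = ε/(8+2ε)`, then for every
`β ∈ [1, 4+ε]` and every positive integer `n`,
`E|X − X·1{|X| ≤ n^{1/2−α}}|^β ≤ ((4+ε+β)/(4+ε)) E|X|^{4+ε} n^{−(2 − (1/2−α)β)}`. -/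
theorem truncation_moment_bound
    {W : Type*} [MeasurableSpace W] (P : Measure W) [IsProbabilityMeasure P]
    (X : W → ℂ) (hXmeas : Measurable X)
    (ε : ℝ) (hε : 0 < ε)
    (hmom : Integrable (fun ω => ‖X ω‖ ^ (4 + ε)) P)
    (β : ℝ) (hβ1 : 1 ≤ β) (hβ2 : β ≤ 4 + ε)
    (n : ℕ) (hn : 0 < n) :
    ∫ ω, ‖X ω - (if ‖X ω‖ ≤ (n : ℝ) ^ ((1 : ℝ) / 2 - ε / (8 + 2 * ε)) then X ω else 0)‖ ^ β ∂P ≤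
      ((4 + ε + β) / (4 + ε)) * (∫ ω, ‖X ω‖ ^ (4 + ε) ∂P) *
        (n : ℝ) ^ (-(2 - ((1 : ℝ) / 2 - ε / (8 + 2 * ε)) * β)) := by
  set α : ℝ := ε / (8 + 2 * ε) with hα
  set t : ℝ := (n : ℝ) ^ ((1 : ℝ) / 2 - α) with htdef
  have hn1 : (1 : ℝ) ≤ (n : ℝ) := by exact_mod_cast hn
  have hnpos : (0 : ℝ) < (n : ℝ) := by positivity
  have ht : 0 < t := Real.rpow_pos_of_pos hnpos _
  have hβpos : (0 : ℝ) < β := lt_of_lt_of_le one_pos hβ1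
  have hc : (0 : ℝ) ≤ t ^ (β - (4 + ε)) := le_of_lt (Real.rpow_pos_of_pos ht _)
  -- pointwise bound
  have hpt : ∀ ω, ‖X ω - (if ‖X ω‖ ≤ t then X ω else 0)‖ ^ β ≤
      ‖X ω‖ ^ (4 + ε) * t ^ (β - (4 + ε)) := by
    intro ω
    by_cases h : ‖X ω‖ ≤ t
    · simp only [h, if_pos, sub_self, norm_zero]
      rw [Real.zero_rpow (ne_of_gt hβpos)]
      positivity
    · simp only [h, if_neg, not_false_iff, sub_zero]
      push_neg at h
      have hX0 : 0 < ‖X ω‖ := lt_trans ht h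
      have : ‖X ω‖ ^ β = ‖X ω‖ ^ (4 + ε) * ‖X ω‖ ^ (β - (4 + ε)) := by
        rw [← Real.rpow_add hX0]; ring_nf
      rw [this]
      apply mul_le_mul_of_nonneg_left _ (le_of_lt (Real.rpow_pos_of_pos hX0 _))
      exact Real.rpow_le_rpow_of_nonpos ht (le_of_lt h) (by linarith)
  have hgi : Integrable (fun ω => ‖X ω‖ ^ (4 + ε) * t ^ (β - (4 + ε))) P :=
    hmom.mul_const _
  have hmono : ∫ ω, ‖X ω - (if ‖X ω‖ ≤ t then X ω else 0)‖ ^ β ∂P ≤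
      ∫ ω, ‖X ω‖ ^ (4 + ε) * t ^ (β - (4 + ε)) ∂P := by
    apply integral_mono_of_nonneg
    · filter_upwards with ω; positivity
    · exact hgi
    · filter_upwards with ω; exact hpt ω
  rw [integral_mul_const] at hmono
  refine hmono.trans ?_
  -- rewrite the constant
  have hexp : t ^ (β - (4 + ε)) = (n : ℝ) ^ (-(2 - ((1 : ℝ) / 2 - α) * β)) := by
    rw [htdef, ← Real.rpow_mul (le_of_lt hnpos)]
    congr 1
    have h8 : (8 : ℝ) + 2 * ε ≠ 0 := by positivity
    rw [hα]; field_simp; ring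
  rw [hexp]
  have hI : 0 ≤ ∫ ω, ‖X ω‖ ^ (4 + ε) ∂P :=
    integral_nonneg fun ω => by positivity
  have hK : (1 : ℝ) ≤ (4 + ε + β) / (4 + ε) := by
    rw [le_div_iff₀ (by linarith)]; linarith
  have hnr : (0 : ℝ) ≤ (n : ℝ) ^ (-(2 - ((1 : ℝ) / 2 - α) * β)) :=
    le_of_lt (Real.rpow_pos_of_pos hnpos _)
  nlinarith [mul_nonneg hI hnr, mul_le_mul_of_nonneg_right
    (mul_le_mul_of_nonneg_right hK hI) hnr]

end
end
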